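/- Let n ≥ 1, let f : ℝⁿ → ℝ be continuously differentiable, let r > 0, and let M > 0 satisfy ‖∇f(x)‖ ≤ M for all x in the closed ball B(0, r). Set T := r/(4Mn). Then for every α ∈ (0, T/2], every k̄ ∈ ℕ, and every cyclic coordinate descent trajectory of f with step size α whose inner iterates are (x_{k,i}) and which satisfies x_{k̄} ∈ B(0, r/2), one has x_{k,i} ∈ B(0, r) for all k ∈ {k̄, …, k̄ + ⌊T/α⌋} and all i ∈ {0, …, n}. (Intermediate claim established in the proof of the paper's Proposition 4.2.) -/

import Mathlib

/-!
Each inner step of coordinate descent moves the iterate by `α |∂ᵢf| ≤ α ‖∇f‖`, hence by at most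
`α M` as long as the iterate stays in `B(0, r)`. Starting in `B(0, r/2)`, after `N` inner steps the
iterate has norm at most `r/2 + N α M`; over `⌊T/α⌋ + 1` outer sweeps of `n` steps each this is at
most `r/2 + (3T/2) n M = r/2 + 3r/8 < r`, so the iterate never gets the chance to leave `B(0, r)`.
-/

/-- A cyclic coordinate descent trajectory of `f` with step size `α`, with explicit inner
iterates `z k i` (`= x_{k,i}` in the paper): `z k 0 = x k`,
`z k i = z k (i-1) - α ∇_{σᵏ i} f (z k (i-1))` for some permutation `σᵏ`, and
`x (k+1) = z k n`, where `∇_i f x = (∂f/∂x_i)(x) • e_i`. -/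
def IsCCDTrajInner {n : ℕ} (f : EuclideanSpace ℝ (Fin n) → ℝ) (α : ℝ)
    (x : ℕ → EuclideanSpace ℝ (Fin n)) (z : ℕ → Fin (n + 1) → EuclideanSpace ℝ (Fin n)) :
    Prop :=
  ∀ k : ℕ, z k 0 = x k ∧
    (∃ σ : Equiv.Perm (Fin n), ∀ i : Fin n, z k i.succ
      = z k i.castSucc - α • EuclideanSpace.single (σ i) (gradient f (z k i.castSucc) (σ i))) ∧
    x (k + 1) = z k (Fin.last n)

lemma norm_smul_single_apply_le {ι : Type*} [Fintype ι] [DecidableEq ι] (α : ℝ)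
    (g : EuclideanSpace ℝ ι) (j : ι) :
    ‖α • EuclideanSpace.single j (g j)‖ ≤ |α| * ‖g‖ := by
  rw [norm_smul, Real.norm_eq_abs, PiLp.norm_single]
  exact mul_le_mul_of_nonneg_left (PiLp.norm_apply_le g j) (abs_nonneg α)

section Sweeps

variable {E : Type*} [SeminormedAddCommGroup E] {n : ℕ} {r δ : ℝ}

lemma norm_sweep_le (w : Fin (n + 1) → E) {s : ℝ} (hδ : 0 ≤ δ)
    (hstep : ∀ i : Fin n, ‖w i.castSucc‖ ≤ r → ‖w i.succ - w i.castSucc‖ ≤ δ)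
    (h0 : ‖w 0‖ ≤ s) (hbudget : s + n * δ ≤ r) (i : Fin (n + 1)) :
    ‖w i‖ ≤ s + i * δ := by
  induction i using Fin.induction with
  | zero => simpa using h0
  | succ i ih =>
    have hi : (i : ℝ) * δ ≤ n * δ :=
      mul_le_mul_of_nonneg_right (by exact_mod_cast i.isLt.le) hδ
    have hin : ‖w i.castSucc‖ ≤ r := by
      simp only [Fin.val_castSucc] at ih
      linarith
    calc ‖w i.succ‖ ≤ ‖w i.castSucc‖ + ‖w i.succ - w i.castSucc‖ := norm_le_insert' _ _
      _ ≤ s + i * δ + δ := add_le_add (by simpa using ih) (hstep i hin)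
      _ = s + (i.succ : ℕ) * δ := by push_cast [Fin.val_succ]; ring

lemma norm_sweeps_le (z : ℕ → Fin (n + 1) → E) {k₀ m : ℕ} {ρ : ℝ} (hδ : 0 ≤ δ)
    (hlink : ∀ k, z (k + 1) 0 = z k (Fin.last n))
    (hstep : ∀ k (i : Fin n), ‖z k i.castSucc‖ ≤ r → ‖z k i.succ - z k i.castSucc‖ ≤ δ)
    (h0 : ‖z k₀ 0‖ ≤ ρ) (hbudget : ρ + (m + 1) * n * δ ≤ r) :
    ∀ j ≤ m, ∀ i, ‖z (k₀ + j) i‖ ≤ r := by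
  have hroom : ∀ j ≤ m, ρ + j * n * δ + n * δ ≤ r := fun j hj => by
    have : ((j : ℝ) + 1) * (n * δ) ≤ (m + 1) * (n * δ) :=
      mul_le_mul_of_nonneg_right (by exact_mod_cast Nat.succ_le_succ hj) (by positivity)
    linarith
  have hsweep : ∀ j ≤ m, ‖z (k₀ + j) 0‖ ≤ ρ + j * n * δ →
      ∀ i, ‖z (k₀ + j) i‖ ≤ ρ + j * n * δ + i * δ := fun j hj hj0 =>
    norm_sweep_le _ hδ (hstep _) hj0 (hroom j hj)
  have hstart : ∀ j ≤ m, ‖z (k₀ + j) 0‖ ≤ ρ + j * n * δ := by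
    intro j hj
    induction j with
    | zero => simpa using h0
    | succ j ih =>
      have hlast := hsweep j (by omega) (ih (by omega)) (Fin.last n)
      rw [← add_assoc, hlink]
      push_cast at hlast ⊢
      linarith
  intro j hj i
  have hi : (i : ℝ) * δ ≤ n * δ :=
    mul_le_mul_of_nonneg_right (by exact_mod_cast Fin.is_le i) hδ
  linarith [hsweep j hj (hstart j hj) i, hroom j hj]

end Sweeps

lemma floor_div_add_one_mul_le {T α : ℝ} (hα : 0 < α) (hαT : α ≤ T / 2) :
    (⌊T / α⌋₊ + 1) * α ≤ 3 / 2 * T := by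
  have hfloor : (⌊T / α⌋₊ : ℝ) * α ≤ T :=
    (mul_le_mul_of_nonneg_right (Nat.floor_le (div_nonneg (by linarith) hα.le)) hα.le).trans_eq
      (div_mul_cancel₀ T hα.ne')
  linarith

theorem stmt_12_general {n : ℕ} (hn : 1 ≤ n) (f : EuclideanSpace ℝ (Fin n) → ℝ)
    (r M : ℝ) (hr : 0 < r) (hM : 0 < M)
    (hgrad : ∀ x ∈ Metric.closedBall (0 : EuclideanSpace ℝ (Fin n)) r, ‖gradient f x‖ ≤ M)
    (T : ℝ) (hT : T = r / (4 * M * n)) :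
    ∀ α : ℝ, 0 < α → α ≤ T / 2 → ∀ kbar : ℕ,
      ∀ (x : ℕ → EuclideanSpace ℝ (Fin n)) (z : ℕ → Fin (n + 1) → EuclideanSpace ℝ (Fin n)),
        IsCCDTrajInner f α x z →
        x kbar ∈ Metric.closedBall (0 : EuclideanSpace ℝ (Fin n)) (r / 2) →
        ∀ k : ℕ, kbar ≤ k → k ≤ kbar + ⌊T / α⌋₊ →
          ∀ i : Fin (n + 1), z k i ∈ Metric.closedBall (0 : EuclideanSpace ℝ (Fin n)) r := by
  intro α hα hαT kbar x z htraj hx k hk hkK i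
  have hstep : ∀ k (i : Fin n), ‖z k i.castSucc‖ ≤ r →
      ‖z k i.succ - z k i.castSucc‖ ≤ α * M := by
    intro k i hi
    obtain ⟨-, ⟨σ, hσ⟩, -⟩ := htraj k
    rw [hσ i, sub_sub_cancel_left, norm_neg]
    calc _ ≤ |α| * ‖gradient f (z k i.castSucc)‖ := norm_smul_single_apply_le _ _ _
      _ ≤ α * M := by
        rw [abs_of_pos hα]
        exact mul_le_mul_of_nonneg_left (hgrad _ (by simpa using hi)) hα.le
  have hlink : ∀ k, z (k + 1) 0 = z k (Fin.last n) := fun k =>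
    (htraj (k + 1)).1.trans (htraj k).2.2
  have hbudget : r / 2 + (⌊T / α⌋₊ + 1) * n * (α * M) ≤ r := by
    have hn' : (0 : ℝ) < n := by exact_mod_cast hn
    have hTnM : T * (n * M) = r / 4 := by rw [hT]; field_simp
    nlinarith [floor_div_add_one_mul_le hα hαT, mul_pos hn' hM]
  have h0 : ‖z kbar 0‖ ≤ r / 2 := by rw [(htraj kbar).1]; simpa using hx
  obtain ⟨j, rfl⟩ := Nat.exists_eq_add_of_le hk
  simpa using norm_sweeps_le z (by positivity) hlink hstep h0 hbudget j (by omega) i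

theorem stmt_12 {n : ℕ} (hn : 1 ≤ n) (f : EuclideanSpace ℝ (Fin n) → ℝ)
    (hf : ContDiff ℝ 1 f) (r M : ℝ) (hr : 0 < r) (hM : 0 < M)
    (hgrad : ∀ x ∈ Metric.closedBall (0 : EuclideanSpace ℝ (Fin n)) r, ‖gradient f x‖ ≤ M)
    (T : ℝ) (hT : T = r / (4 * M * n)) :
    ∀ α : ℝ, 0 < α → α ≤ T / 2 → ∀ kbar : ℕ,
      ∀ (x : ℕ → EuclideanSpace ℝ (Fin n)) (z : ℕ → Fin (n + 1) → EuclideanSpace ℝ (Fin n)),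
        IsCCDTrajInner f α x z →
        x kbar ∈ Metric.closedBall (0 : EuclideanSpace ℝ (Fin n)) (r / 2) →
        ∀ k : ℕ, kbar ≤ k → k ≤ kbar + ⌊T / α⌋₊ →
          ∀ i : Fin (n + 1), z k i ∈ Metric.closedBall (0 : EuclideanSpace ℝ (Fin n)) r :=
  stmt_12_general hn f r M hr hM hgrad T hT
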